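/- arXiv:2506.18038 — 2 statements merged into one kernel-verified Lean document; each statement's English description precedes it below -/
import Mathlib

section
/- For every natural number m ≥ 1, the m-th derivative of the function ξ ↦ ξ/(ξ+i)^m evaluated at ξ = i equals (2m-2)!·(-i)·2^{-2m}/(m-1)!. -/
open Complex Finset

lemma prod_range_add_asc (n : ℕ) : ∀ k : ℕ, (∏ i ∈ Finset.range k, (n + i)) = n.ascFactorial k
  | 0 => by simp
  | k + 1 => by
      rw [Finset.prod_range_succ, prod_range_add_asc n k, Nat.ascFactorial_succ, mul_comm]

lemma iteratedDerivWithin_isOpen' {f : ℂ → ℂ} {s : Set ℂ} {x : ℂ} (hs : IsOpen s) (hx : x ∈ s)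
    (n : ℕ) : iteratedDerivWithin n f s x = iteratedDeriv n f x := by
  simp only [iteratedDerivWithin, iteratedDeriv, iteratedFDerivWithin_of_isOpen n hs hx]

lemma zpow_shift (k : ℤ) (n : ℕ) :
    iteratedDeriv n (fun ξ : ℂ => (ξ + Complex.I) ^ k) Complex.I =
      (∏ i ∈ Finset.range n, ((k : ℂ) - i)) * (2 * Complex.I) ^ (k - n) := by
  have h := iteratedDeriv_comp_add_const n (fun z : ℂ => z ^ k) Complex.I
  have h2 : (fun ξ : ℂ => (ξ + Complex.I) ^ k)
      = fun z : ℂ => (fun z : ℂ => z ^ k) (z + Complex.I) := rfl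
  rw [h2, h]
  simp only [iteratedDeriv_eq_iterate]
  rw [iter_deriv_zpow, ← two_mul]

/-- For `m ≥ 1`, the `m`-th derivative of `ξ ↦ ξ/(ξ+i)^m` at `ξ = i` equals
`(2m-2)!·(-i)·2^{-2m}/(m-1)!`. -/
theorem iteratedDeriv_id_div_pow (m : ℕ) (hm : 1 ≤ m) :
    iteratedDeriv m (fun ξ : ℂ => ξ / (ξ + Complex.I) ^ m) Complex.I =
      ((2 * m - 2).factorial : ℂ) * (-Complex.I) * ((2 : ℂ) ^ (2 * m))⁻¹ /
        ((m - 1).factorial : ℂ) := by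
  obtain ⟨k, rfl⟩ : ∃ k, m = k + 1 := ⟨m - 1, by omega⟩
  rw [show 2 * (k + 1) - 2 = 2 * k from by omega, show k + 1 - 1 = k from by omega]
  set s : Set ℂ := {z : ℂ | z + Complex.I ≠ 0} with hsdef
  have hs : IsOpen s :=
    IsOpen.preimage (continuous_id.add continuous_const) isOpen_compl_singleton
  have hIs : Complex.I ∈ s := by
    intro h
    have := congrArg Complex.im h
    simp at this
  have hb : ContDiff ℂ (k + 1 : ℕ) (fun ξ : ℂ => ξ + Complex.I) := contDiff_id.add contDiff_const
  have h1 : ContDiffOn ℂ (k + 1 : ℕ) (fun ξ : ℂ => ((ξ + Complex.I) ^ k)⁻¹) s :=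
    ((hb.contDiffOn.pow k).inv (fun x hx => pow_ne_zero _ hx))
  have h2i : ContDiffOn ℂ (k + 1 : ℕ) (fun ξ : ℂ => ((ξ + Complex.I) ^ (k + 1))⁻¹) s :=
    ((hb.contDiffOn.pow (k + 1)).inv (fun x hx => pow_ne_zero _ hx))
  have h2 : ContDiffOn ℂ (k + 1 : ℕ)
      (fun ξ : ℂ => Complex.I * ((ξ + Complex.I) ^ (k + 1))⁻¹) s := contDiffOn_const.mul h2i
  have hev : (fun ξ : ℂ => ξ / (ξ + Complex.I) ^ (k + 1)) =ᶠ[nhds Complex.I]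
      (fun ξ : ℂ => ((ξ + Complex.I) ^ k)⁻¹ - Complex.I * ((ξ + Complex.I) ^ (k + 1))⁻¹) := by
    filter_upwards [hs.mem_nhds hIs] with z hz
    have hz0 : z + Complex.I ≠ 0 := hz
    rw [pow_succ]
    field_simp
    ring
  rw [Filter.EventuallyEq.iteratedDeriv_eq (k + 1) hev,
    ← iteratedDerivWithin_isOpen' hs hIs]
  have hsub := iteratedDerivWithin_sub hIs hs.uniqueDiffOn (h1 _ hIs) (h2 _ hIs)
  rw [show (fun ξ : ℂ => ((ξ + Complex.I) ^ k)⁻¹ - Complex.I * ((ξ + Complex.I) ^ (k + 1))⁻¹)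
      = ((fun ξ : ℂ => ((ξ + Complex.I) ^ k)⁻¹)
        - fun ξ : ℂ => Complex.I * ((ξ + Complex.I) ^ (k + 1))⁻¹) from rfl, hsub,
    iteratedDerivWithin_const_mul hIs hs.uniqueDiffOn _ (h2i _ hIs),
    iteratedDerivWithin_isOpen' hs hIs, iteratedDerivWithin_isOpen' hs hIs]
  have r1 : (fun ξ : ℂ => ((ξ + Complex.I) ^ k)⁻¹)
      = fun ξ : ℂ => (ξ + Complex.I) ^ (-(k : ℤ)) := by
    funext ξ; rw [zpow_neg, zpow_natCast]
  have r2 : (fun ξ : ℂ => ((ξ + Complex.I) ^ (k + 1))⁻¹)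
      = fun ξ : ℂ => (ξ + Complex.I) ^ (-((k : ℤ) + 1)) := by
    funext ξ; rw [zpow_neg, ← zpow_natCast]; norm_num
  rw [r1, r2, zpow_shift, zpow_shift]
  have prod_neg_fun : ∀ (n : ℕ) (f : ℕ → ℂ),
      (∏ i ∈ Finset.range n, (-(f i))) = (-1) ^ n * ∏ i ∈ Finset.range n, f i := by
    intro n f
    induction n with
    | zero => simp
    | succ n ih => rw [Finset.prod_range_succ, Finset.prod_range_succ, ih, pow_succ]; ring
  have hP1 : (∏ i ∈ Finset.range (k + 1), (((-(k : ℤ) : ℤ) : ℂ) - (i : ℕ)))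
      = (-1 : ℂ) ^ (k + 1) * (k.ascFactorial (k + 1) : ℂ) := by
    rw [← prod_range_add_asc, Nat.cast_prod, ← prod_neg_fun]
    refine Finset.prod_congr rfl fun i _ => by push_cast; ring
  have hP2 : (∏ i ∈ Finset.range (k + 1), (((-((k : ℤ) + 1) : ℤ) : ℂ) - (i : ℕ)))
      = (-1 : ℂ) ^ (k + 1) * ((k + 1).ascFactorial (k + 1) : ℂ) := by
    rw [← prod_range_add_asc, Nat.cast_prod, ← prod_neg_fun]
    refine Finset.prod_congr rfl fun i _ => by push_cast; ring
  have z1 : (2 * Complex.I) ^ (-(k : ℤ) - ((k + 1 : ℕ) : ℤ))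
      = (((2 : ℂ) * Complex.I) ^ (2 * k + 1))⁻¹ := by
    rw [show (-(k : ℤ) - ((k + 1 : ℕ) : ℤ)) = -((2 * k + 1 : ℕ) : ℤ) from by push_cast; ring,
      zpow_neg, zpow_natCast]
  have z2 : (2 * Complex.I) ^ (-((k : ℤ) + 1) - ((k + 1 : ℕ) : ℤ))
      = (((2 : ℂ) * Complex.I) ^ (2 * k + 2))⁻¹ := by
    rw [show (-((k : ℤ) + 1) - ((k + 1 : ℕ) : ℤ)) = -((2 * k + 2 : ℕ) : ℤ) from by push_cast; ring,
      zpow_neg, zpow_natCast]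
  have w1 : ((2 : ℂ) * Complex.I) ^ (2 * k + 1)
      = 2 ^ (2 * k + 1) * ((-1 : ℂ) ^ k * Complex.I) := by
    rw [mul_pow]; congr 1; rw [pow_succ, pow_mul, Complex.I_sq]
  have w2 : ((2 : ℂ) * Complex.I) ^ (2 * k + 2) = 2 ^ (2 * k + 2) * (-1 : ℂ) ^ (k + 1) := by
    rw [mul_pow]; congr 1
    rw [show 2 * k + 2 = 2 * (k + 1) from by ring, pow_mul, Complex.I_sq]
  have hBn : (k + 1).ascFactorial (k + 1) * k.factorial = (2 * k + 1) * (2 * k).factorial := by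
    rw [mul_comm, Nat.factorial_mul_ascFactorial, show k + (k + 1) = 2 * k + 1 from by omega,
      Nat.factorial_succ]
  have h2' : k * ((k + 1).ascFactorial (k + 1)) = (2 * k + 1) * k.ascFactorial (k + 1) := by
    have h := Nat.succ_ascFactorial k (k + 1)
    rw [show k + (k + 1) = 2 * k + 1 from by omega] at h
    exact h
  have hAn : k.ascFactorial (k + 1) * k.factorial * (2 * k + 1)
      = k * ((2 * k + 1) * (2 * k).factorial) := by
    calc k.ascFactorial (k + 1) * k.factorial * (2 * k + 1)
        = ((2 * k + 1) * k.ascFactorial (k + 1)) * k.factorial := by ring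
      _ = (k * ((k + 1).ascFactorial (k + 1))) * k.factorial := by rw [← h2']
      _ = k * ((k + 1).ascFactorial (k + 1) * k.factorial) := by ring
      _ = k * ((2 * k + 1) * (2 * k).factorial) := by rw [hBn]
  have h0 : (2 * (k : ℂ) + 1) ≠ 0 := by
    have : ((2 * k + 1 : ℕ) : ℂ) ≠ 0 := Nat.cast_ne_zero.mpr (by omega)
    push_cast at this; exact this
  have hA2 : (k.ascFactorial (k + 1) : ℂ) * (k.factorial : ℂ) * (2 * (k : ℂ) + 1)
      = (k : ℂ) * ((2 * (k : ℂ) + 1) * ((2 * k).factorial : ℂ)) := by exact_mod_cast hAn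
  have hA3 : (k.ascFactorial (k + 1) : ℂ) * (k.factorial : ℂ)
      = (k : ℂ) * ((2 * k).factorial : ℂ) :=
    mul_right_cancel₀ h0 (by linear_combination hA2)
  have hB2 : ((k + 1).ascFactorial (k + 1) : ℂ) * (k.factorial : ℂ)
      = (2 * (k : ℂ) + 1) * ((2 * k).factorial : ℂ) := by exact_mod_cast hBn
  have hsq : (-1 : ℂ) ^ k * (-1 : ℂ) ^ k = 1 := by
    rw [← pow_add, ← two_mul, pow_mul, neg_one_sq, one_pow]
  have hkf : ((k.factorial : ℕ) : ℂ) ≠ 0 := Nat.cast_ne_zero.mpr k.factorial_pos.ne'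
  rw [hP1, hP2, z1, z2, w1, w2, show 2 * (k + 1) = 2 * k + 2 from by ring]
  field_simp
  linear_combination
      ((-1 : ℂ) ^ (k + 1) * 2 ^ (2 * k + 2)) * hA3 -
      ((2 : ℂ) ^ (2 * k + 1) * (-1) ^ k * Complex.I ^ 2) * hB2 -
      (2 * (2 : ℂ) ^ (2 * k + 1) * (k : ℂ) * ((2 * k).factorial : ℂ) *
        (-1) ^ k) * Complex.I_sq
end

section
/- Let c denote Clifford multiplication on a spinor module over an n-dimensional inner product space, and let c(T) = Σ_{α<β<γ} T_{αβγ} c(e_α)c(e_β)c(e_γ) for an alternating 3-tensor T. Then for any vectors u, v, w: Tr(c(u)(c(w)c(T) + c(T)c(w))c(v)) = -2 T(u,v,w) Tr(Id). -/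
open scoped RealInnerProductSpace

set_option linter.unusedSectionVars false
set_option maxHeartbeats 1000000

def Sr {n : ℕ} (x y z t : Fin n) : ℝ :=
  (if x = y then 1 else 0) * (if z = t then 1 else 0)
    - (if x = z then 1 else 0) * (if y = t then 1 else 0)
    + (if x = t then 1 else 0) * (if y = z then 1 else 0)

def Kr {n : ℕ} (i j k a b d : Fin n) : ℝ :=
  (if k = a then 1 else 0) * Sr i b d j
    - (if k = b then 1 else 0) * Sr i a d j
    + (if k = d then 1 else 0) * Sr i a b j

section
variable {n : ℕ} {V : Type*} [NormedAddCommGroup V] [InnerProductSpace ℝ V]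
  {N : Type*} [AddCommGroup N] [Module ℂ N] [FiniteDimensional ℂ N]
  (e : OrthonormalBasis (Fin n) ℝ V)
  (c : V →ₗ[ℝ] Module.End ℂ N)
  (hc : ∀ a b : V, c a * c b + c b * c a = ((-2 : ℂ) * (⟪a, b⟫ : ℝ)) • 1)

local notation "τ" => LinearMap.trace ℂ N

include hc

lemma key' (x y : V) : c x * c y = ((-2:ℂ) * ((⟪x,y⟫:ℝ):ℂ)) • 1 - c y * c x :=
  eq_sub_of_add_eq (hc x y)

lemma trace2 (p q : V) : τ (c p * c q) = -((⟪p,q⟫:ℝ):ℂ) * τ (1 : Module.End ℂ N) := by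
  have h := congrArg τ (hc p q)
  rw [map_add, map_smul, smul_eq_mul] at h
  have h2 := LinearMap.trace_mul_comm ℂ (c p) (c q)
  linear_combination (h + h2) / 2

lemma trace4 (x y z t : V) :
    τ (c x * (c y * c z) * c t) =
      (((⟪x,y⟫:ℝ):ℂ) * ((⟪z,t⟫:ℝ):ℂ) - ((⟪x,z⟫:ℝ):ℂ) * ((⟪y,t⟫:ℝ):ℂ)
        + ((⟪x,t⟫:ℝ):ℂ) * ((⟪y,z⟫:ℝ):ℂ)) * τ (1 : Module.End ℂ N) := by
  have A := congrArg (fun M : Module.End ℂ N => τ (M * (c z * c t))) (key' c hc x y)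
  have B := congrArg (fun M : Module.End ℂ N => τ (c y * (M * c t))) (key' c hc x z)
  have C := congrArg (fun M : Module.End ℂ N => τ (c y * (c z * M))) (key' c hc x t)
  simp only [sub_mul, mul_sub, smul_mul_assoc, mul_smul_comm, one_mul, mul_one,
    map_sub, map_smul, smul_eq_mul, mul_assoc] at A B C
  have cyc := LinearMap.trace_mul_comm ℂ (c x) (c y * (c z * c t))
  simp only [mul_assoc] at cyc
  have h1 := trace2 c hc z t
  have h2 := trace2 c hc y t
  have h3 := trace2 c hc y z
  simp only [mul_assoc]
  linear_combination (A - B + C + cyc) / 2 + (-((⟪x,y⟫:ℝ):ℂ)) * h1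
    + ((⟪x,z⟫:ℝ):ℂ) * h2 + (-((⟪x,t⟫:ℝ):ℂ)) * h3

lemma anticomm (w a b d : V) :
    c w * (c a * c b * c d) + c a * c b * c d * c w
      = ((-2:ℂ) * ((⟪w,a⟫:ℝ):ℂ)) • (c b * c d) - ((-2:ℂ) * ((⟪w,b⟫:ℝ):ℂ)) • (c a * c d)
        + ((-2:ℂ) * ((⟪w,d⟫:ℝ):ℂ)) • (c a * c b) := by
  have h3 := key' c hc w d
  have e2 : c w * (c b * c d)
      = ((-2:ℂ) * ((⟪w,b⟫:ℝ):ℂ)) • c d - ((-2:ℂ) * ((⟪w,d⟫:ℝ):ℂ)) • c b + c b * (c d * c w) := by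
    rw [← mul_assoc, key' c hc w b, sub_mul, smul_mul_assoc, one_mul, mul_assoc, h3,
      mul_sub, mul_smul_comm, mul_one]
    abel
  have e1 : c w * (c a * (c b * c d))
      = ((-2:ℂ) * ((⟪w,a⟫:ℝ):ℂ)) • (c b * c d) - c a * (c w * (c b * c d)) := by
    rw [← mul_assoc, key' c hc w a, sub_mul, smul_mul_assoc, one_mul, mul_assoc]
  calc c w * (c a * c b * c d) + c a * c b * c d * c w
      = c w * (c a * (c b * c d)) + c a * (c b * (c d * c w)) := by
        simp only [mul_assoc]
    _ = _ := by
        rw [e1, e2]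
        simp only [mul_sub, mul_add, mul_smul_comm]
        abel

lemma term_trace (i j k α β γ : Fin n) :
    τ (c (e i) * (c (e k) * (c (e α) * c (e β) * c (e γ))
        + c (e α) * c (e β) * c (e γ) * c (e k)) * c (e j))
      = (-2:ℂ) * ((Kr i j k α β γ : ℝ) : ℂ) * τ (1 : Module.End ℂ N) := by
  have horth : ∀ a b : Fin n, ⟪e a, e b⟫ = if a = b then (1:ℝ) else 0 :=
    orthonormal_iff_ite.mp e.orthonormal
  rw [anticomm c hc]
  simp only [mul_sub, mul_add, sub_mul, add_mul, mul_smul_comm, smul_mul_assoc,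
    map_sub, map_add, map_smul, smul_eq_mul]
  rw [trace4 c hc (e i) (e β) (e γ) (e j), trace4 c hc (e i) (e α) (e γ) (e j),
    trace4 c hc (e i) (e α) (e β) (e j)]
  simp only [horth, Kr, Sr]
  push_cast [apply_ite (fun x : ℝ => (x : ℂ))]
  ring
end

lemma Sr_zero {n : ℕ} {x y z t : Fin n} (h1 : x ≠ y ∨ z ≠ t) (h2 : x ≠ z ∨ y ≠ t)
    (h3 : x ≠ t ∨ y ≠ z) : Sr x y z t = 0 := by
  unfold Sr
  rcases h1 with h1 | h1 <;> rcases h2 with h2 | h2 <;> rcases h3 with h3 | h3 <;>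
    simp [h1, h2, h3]

lemma Kr_eq_zero {n : ℕ} {i j k a b d : Fin n} (hab : a < b) (hbd : b < d)
    (h : (¬((i = a ∨ i = b ∨ i = d) ∧ (j = a ∨ j = b ∨ j = d) ∧ (k = a ∨ k = b ∨ k = d)))
      ∨ i = j ∨ i = k ∨ j = k) : Kr i j k a b d = 0 := by
  unfold Kr
  have t1 : (if k = a then (1:ℝ) else 0) * Sr i b d j = 0 := by
    rcases eq_or_ne k a with hk | hk
    · rw [if_pos hk, one_mul]
      exact Sr_zero (by omega) (by omega) (by omega)
    · rw [if_neg hk, zero_mul]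
  have t2 : (if k = b then (1:ℝ) else 0) * Sr i a d j = 0 := by
    rcases eq_or_ne k b with hk | hk
    · rw [if_pos hk, one_mul]
      exact Sr_zero (by omega) (by omega) (by omega)
    · rw [if_neg hk, zero_mul]
  have t3 : (if k = d then (1:ℝ) else 0) * Sr i a b j = 0 := by
    rcases eq_or_ne k d with hk | hk
    · rw [if_pos hk, one_mul]
      exact Sr_zero (by omega) (by omega) (by omega)
    · rw [if_neg hk, zero_mul]
  rw [t1, t2, t3]; ring

section
variable {V : Type*} [NormedAddCommGroup V] [InnerProductSpace ℝ V]
  (T : V [⋀^Fin 3]→ₗ[ℝ] ℝ)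

lemma swap01 (x y z : V) : T ![y, x, z] = -T ![x, y, z] := by
  have hv : (![x, y, z] ∘ Equiv.swap (0 : Fin 3) 1) = ![y, x, z] := by
    funext a; fin_cases a <;> simp [Equiv.swap_apply_def]
  rw [← hv, AlternatingMap.map_swap _ _ (by decide : (0 : Fin 3) ≠ 1)]

lemma swap12 (x y z : V) : T ![x, z, y] = -T ![x, y, z] := by
  have hv : (![x, y, z] ∘ Equiv.swap (1 : Fin 3) 2) = ![x, z, y] := by
    funext a; fin_cases a <;> simp [Equiv.swap_apply_def]
  rw [← hv, AlternatingMap.map_swap _ _ (by decide : (1 : Fin 3) ≠ 2)]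

lemma scalar_key (n : ℕ) (e : OrthonormalBasis (Fin n) ℝ V) (i j k : Fin n) :
    ∑ p ∈ Finset.univ.filter
        (fun p : Fin n × Fin n × Fin n => p.1 < p.2.1 ∧ p.2.1 < p.2.2),
      T ![e p.1, e p.2.1, e p.2.2] * Kr i j k p.1 p.2.1 p.2.2
    = T ![e i, e j, e k] := by
  by_cases hdeg : i = j ∨ i = k ∨ j = k
  · have hzero : T ![e i, e j, e k] = 0 := by
      rcases hdeg with h | h | h
      · exact T.map_eq_zero_of_eq _ (by simp [h] : ![e i, e j, e k] 0 = ![e i, e j, e k] 1)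
          (by decide)
      · exact T.map_eq_zero_of_eq _ (by simp [h] : ![e i, e j, e k] 0 = ![e i, e j, e k] 2)
          (by decide)
      · exact T.map_eq_zero_of_eq _ (by simp [h] : ![e i, e j, e k] 1 = ![e i, e j, e k] 2)
          (by decide)
    rw [hzero]
    refine Finset.sum_eq_zero fun p hp => ?_
    simp only [Finset.mem_filter] at hp
    rw [Kr_eq_zero hp.2.1 hp.2.2 (Or.inr hdeg), mul_zero]
  · push_neg at hdeg
    obtain ⟨hij, hik, hjk⟩ := hdeg
    -- six orderings
    have main : ∀ a b d : Fin n, a < b → b < d →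
        ((i = a ∨ i = b ∨ i = d) ∧ (j = a ∨ j = b ∨ j = d) ∧ (k = a ∨ k = b ∨ k = d)) →
        ∑ p ∈ Finset.univ.filter
            (fun p : Fin n × Fin n × Fin n => p.1 < p.2.1 ∧ p.2.1 < p.2.2),
          T ![e p.1, e p.2.1, e p.2.2] * Kr i j k p.1 p.2.1 p.2.2
        = T ![e a, e b, e d] * Kr i j k a b d := by
      intro a b d hab hbd hmem
      refine Finset.sum_eq_single_of_mem (a, b, d) (by simp [hab, hbd]) ?_
      rintro ⟨x, y, z⟩ hp hne
      simp only [Finset.mem_filter] at hp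
      simp only [ne_eq, Prod.mk.injEq, not_and] at hne
      rw [Kr_eq_zero hp.2.1 hp.2.2 (Or.inl (by omega)), mul_zero]
    rcases lt_or_gt_of_ne hij with h1 | h1 <;> rcases lt_or_gt_of_ne hik with h2 | h2 <;>
      rcases lt_or_gt_of_ne hjk with h3 | h3
    · -- i < j < k : (i,j,k)
      rw [main i j k h1 h3 (by omega)]
      have hK : Kr i j k i j k = 1 := by
        unfold Kr Sr; split_ifs <;> first | omega | norm_num
      rw [hK, mul_one]
    · -- i < k < j : (i,k,j)
      rw [main i k j h2 h3 (by omega)]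
      have hK : Kr i j k i k j = -1 := by
        unfold Kr Sr; split_ifs <;> first | omega | norm_num
      rw [hK]
      nlinarith [swap12 T (e i) (e j) (e k)]
    · -- i<j, k<i, j<k : impossible
      omega
    · -- k < i < j : (k,i,j)
      rw [main k i j h2 h1 (by omega)]
      have hK : Kr i j k k i j = 1 := by
        unfold Kr Sr; split_ifs <;> first | omega | norm_num
      rw [hK]
      nlinarith [swap01 T (e i) (e k) (e j), swap12 T (e i) (e j) (e k)]
    · -- j < i < k : (j,i,k)
      rw [main j i k h1 h2 (by omega)]
      have hK : Kr i j k j i k = -1 := by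
        unfold Kr Sr; split_ifs <;> first | omega | norm_num
      rw [hK]
      nlinarith [swap01 T (e i) (e j) (e k)]
    · -- j<i, i<k, k<j : impossible
      omega
    · -- j < k < i : (j,k,i)
      rw [main j k i h3 h2 (by omega)]
      have hK : Kr i j k j k i = 1 := by
        unfold Kr Sr; split_ifs <;> first | omega | norm_num
      rw [hK]
      nlinarith [swap12 T (e j) (e i) (e k), swap01 T (e i) (e j) (e k)]
    · -- k < j < i : (k,j,i)
      rw [main k j i h3 h1 (by omega)]
      have hK : Kr i j k k j i = -1 := by
        unfold Kr Sr; split_ifs <;> first | omega | norm_num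
      rw [hK]
      nlinarith [swap01 T (e j) (e k) (e i), swap12 T (e j) (e i) (e k), swap01 T (e i) (e j) (e k)]
end

section
variable {V : Type*} [NormedAddCommGroup V] [InnerProductSpace ℝ V]
  {ι : Type*} [Fintype ι]

lemma alt_sum_apply {m : ℕ} (s : Finset ι) (g : ι → (V [⋀^Fin m]→ₗ[ℝ] ℝ))
    (v : Fin m → V) : (∑ k ∈ s, g k) v = ∑ k ∈ s, g k v := by
  classical
  induction s using Finset.induction with
  | empty => simp
  | insert h ih => simp_all [AlternatingMap.add_apply]

variable (T : V [⋀^Fin 3]→ₗ[ℝ] ℝ)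

lemma slot3 (x y : V) (f : ι → ℝ) (z : ι → V) :
    T ![x, y, ∑ k, f k • z k] = ∑ k, f k * T ![x, y, z k] := by
  have h : ∀ w, T ![x, y, w]
      = (AlternatingMap.curryLeft (AlternatingMap.curryLeft
          (AlternatingMap.curryLeft T x) y)) w ![] := fun w => rfl
  simp only [h, map_sum, map_smul, alt_sum_apply, AlternatingMap.smul_apply,
    smul_eq_mul]

lemma slot2 (x y : V) (f : ι → ℝ) (z : ι → V) :
    T ![x, ∑ k, f k • z k, y] = ∑ k, f k * T ![x, z k, y] := by
  have h : ∀ v, T ![x, v, y]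
      = (AlternatingMap.curryLeft (AlternatingMap.curryLeft T x)) v ![y] := fun v => rfl
  simp only [h, map_sum, map_smul, alt_sum_apply, AlternatingMap.smul_apply,
    smul_eq_mul]

lemma slot1 (x y : V) (f : ι → ℝ) (z : ι → V) :
    T ![∑ k, f k • z k, x, y] = ∑ k, f k * T ![z k, x, y] := by
  have h : ∀ u, T ![u, x, y] = (AlternatingMap.curryLeft T) u ![x, y] := fun u => rfl
  simp only [h, map_sum, map_smul, alt_sum_apply, AlternatingMap.smul_apply,
    smul_eq_mul]
end


/-- For a 3-form `T` with Clifford action `c(T) = Σ_{α<β<γ} T(e_α,e_β,e_γ)c(e_α)c(e_β)c(e_γ)`,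
and any vectors `u, v, w`:
`Tr(c(u)(c(w)c(T) + c(T)c(w))c(v)) = -2·T(u,v,w)·Tr(Id)`. -/
theorem trace_clifford_three_form (n : ℕ) (V : Type*) [NormedAddCommGroup V]
    [InnerProductSpace ℝ V]
    (N : Type*) [AddCommGroup N] [Module ℂ N] [FiniteDimensional ℂ N]
    (e : OrthonormalBasis (Fin n) ℝ V)
    (c : V →ₗ[ℝ] Module.End ℂ N)
    (hc : ∀ a b : V, c a * c b + c b * c a = ((-2 : ℂ) * (⟪a, b⟫ : ℝ)) • 1)
    (T : V [⋀^Fin 3]→ₗ[ℝ] ℝ)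
    (cT : Module.End ℂ N)
    (hcT : cT = ∑ p ∈ Finset.univ.filter
        (fun p : Fin n × Fin n × Fin n => p.1 < p.2.1 ∧ p.2.1 < p.2.2),
      ((T ![e p.1, e p.2.1, e p.2.2] : ℝ) : ℂ) • (c (e p.1) * c (e p.2.1) * c (e p.2.2)))
    (u v w : V) :
    LinearMap.trace ℂ N (c u * (c w * cT + cT * c w) * c v) =
      -2 * ((T ![u, v, w] : ℝ) : ℂ) * LinearMap.trace ℂ N 1 := by
  have base : ∀ i j k : Fin n,
      LinearMap.trace ℂ N (c (e i) * (c (e k) * cT + cT * c (e k)) * c (e j))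
        = -2 * ((T ![e i, e j, e k] : ℝ) : ℂ) * LinearMap.trace ℂ N 1 := by
    intro i j k
    rw [hcT, Finset.mul_sum, Finset.sum_mul, ← Finset.sum_add_distrib]
    simp only [mul_smul_comm, smul_mul_assoc, ← smul_add]
    rw [Finset.mul_sum, Finset.sum_mul]
    simp only [mul_smul_comm, smul_mul_assoc]
    rw [map_sum]
    simp only [map_smul, smul_eq_mul]
    calc ∑ p ∈ Finset.univ.filter
          (fun p : Fin n × Fin n × Fin n => p.1 < p.2.1 ∧ p.2.1 < p.2.2),
        ((T ![e p.1, e p.2.1, e p.2.2] : ℝ) : ℂ) *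
          LinearMap.trace ℂ N (c (e i) * (c (e k) * (c (e p.1) * c (e p.2.1) * c (e p.2.2))
            + c (e p.1) * c (e p.2.1) * c (e p.2.2) * c (e k)) * c (e j))
        = ∑ p ∈ Finset.univ.filter
          (fun p : Fin n × Fin n × Fin n => p.1 < p.2.1 ∧ p.2.1 < p.2.2),
            -2 * (((T ![e p.1, e p.2.1, e p.2.2] * Kr i j k p.1 p.2.1 p.2.2 : ℝ)) : ℂ)
              * LinearMap.trace ℂ N 1 := by
          refine Finset.sum_congr rfl fun p hp => ?_
          rw [term_trace e c hc]
          push_cast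
          ring
      _ = -2 * ((T ![e i, e j, e k] : ℝ) : ℂ) * LinearMap.trace ℂ N 1 := by
          rw [← scalar_key T n e i j k]
          push_cast
          rw [mul_assoc, Finset.sum_mul, Finset.mul_sum]
          exact Finset.sum_congr rfl fun p _ => by ring
  have base2 : ∀ (i j : Fin n) (w : V),
      LinearMap.trace ℂ N (c (e i) * (c w * cT + cT * c w) * c (e j))
        = -2 * ((T ![e i, e j, w] : ℝ) : ℂ) * LinearMap.trace ℂ N 1 := by
    intro i j w
    rw [← e.sum_repr' w]
    rw [slot3 T (e i) (e j) (fun k => ⟪e k, w⟫) (fun k => e k)]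
    simp only [map_sum, map_smul]
    rw [Finset.sum_mul, Finset.mul_sum, ← Finset.sum_add_distrib]
    simp only [smul_mul_assoc, mul_smul_comm, ← smul_add]
    rw [Finset.mul_sum, Finset.sum_mul]
    simp only [mul_smul_comm, smul_mul_assoc]
    rw [map_sum]
    simp only [LinearMap.map_smul_of_tower]
    push_cast
    rw [mul_assoc, Finset.sum_mul, Finset.mul_sum]
    refine Finset.sum_congr rfl fun k _ => ?_
    rw [base i j k]
    push_cast [Complex.real_smul]
    ring
  have base3 : ∀ (i : Fin n) (v w : V),
      LinearMap.trace ℂ N (c (e i) * (c w * cT + cT * c w) * c v)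
        = -2 * ((T ![e i, v, w] : ℝ) : ℂ) * LinearMap.trace ℂ N 1 := by
    intro i v w
    rw [← e.sum_repr' v]
    rw [slot2 T (e i) w (fun k => ⟪e k, v⟫) (fun k => e k)]
    simp only [map_sum, map_smul]
    rw [Finset.mul_sum]
    simp only [mul_smul_comm]
    rw [map_sum]
    simp only [LinearMap.map_smul_of_tower]
    push_cast
    rw [mul_assoc, Finset.sum_mul, Finset.mul_sum]
    refine Finset.sum_congr rfl fun k _ => ?_
    rw [base2 i k w]
    push_cast [Complex.real_smul]
    ring
  rw [← e.sum_repr' u]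
  rw [slot1 T v w (fun k => ⟪e k, u⟫) (fun k => e k)]
  simp only [map_sum, map_smul]
  rw [Finset.sum_mul, Finset.sum_mul]
  simp only [smul_mul_assoc]
  rw [map_sum]
  simp only [LinearMap.map_smul_of_tower]
  push_cast
  rw [mul_assoc, Finset.sum_mul, Finset.mul_sum]
  refine Finset.sum_congr rfl fun k _ => ?_
  rw [base3 k v w]
  push_cast [Complex.real_smul]
  ring
end
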